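/- Let H be a reflexive semicomplete digraph containing neither R nor C*_3 as an induced subdigraph, such that the underlying graph of H^sym is a proper interval graph. Then the vertices of H can be ordered v_1,...,v_n so that (a) whenever i < j < k and v_i v_k is a symmetric arc, both v_i v_j and v_j v_k are symmetric arcs, and (b) v_i dominates v_j for every pair i < j. -/

import Mathlib

/-!
Pull the relation back along the given proper interval ordering, so that the umbrella property
holds for the natural order. Excluding `R` lets a strict arc `u → v` travel along symmetric arcs:
`u` dominates every symmetric neighbour of `v`, and dually. Hence all arcs between two components
of the symmetric part are strict and point the same way, and excluding `C*_3` makes strict arcs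
transitive, so the components are linearly ordered. Inside one component, the umbrella property
lets a strict arc spread to the leftmost and rightmost vertices of the component, so all strict
arcs of a component point the same way with respect to the position order. Listing the components
in their order, each in position order or reversed according to the direction of its strict arcs,
gives an ordering in which earlier vertices dominate later ones; a symmetric arc lies inside one
component, which is listed consecutively, so the umbrella property is inherited.
-/

theorem exists_equiv_fin_of_isStrictTotalOrder {α : Type*} [Fintype α] {n : ℕ}
    (h : Fintype.card α = n) (r : α → α → Prop) [IsStrictTotalOrder α r] :
    ∃ e : Fin n ≃ α, ∀ i j, i < j → r (e i) (e j) := by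
  classical
  let := linearOrderOfSTO r
  exact ⟨(monoEquivOfFin α h).toEquiv, fun _ _ hij => (monoEquivOfFin α h).strictMono hij⟩

namespace Semicomplete

variable {α : Type*}

def StrictArc (B : α → α → Prop) (a b : α) : Prop := B a b ∧ ¬ B b a

def SymmArc (B : α → α → Prop) (a b : α) : Prop := B a b ∧ B b a

def SymmConnected (B : α → α → Prop) : α → α → Prop := Relation.ReflTransGen (SymmArc B)

def IsSemicomplete (B : α → α → Prop) : Prop := ∀ u v, u ≠ v → B u v ∨ B v u

/-- An induced `R` is a strict path `a → b → c` with `a` and `c` joined by a symmetric arc; an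
induced `C*_3` is a strict directed triangle. -/
def IsRFree (B : α → α → Prop) : Prop :=
  ∀ a b c, StrictArc B a b → StrictArc B b c → ¬ SymmArc B a c

def IsC3Free (B : α → α → Prop) : Prop :=
  ∀ a b c, StrictArc B a b → StrictArc B b c → ¬ StrictArc B c a

def IsUmbrella [LinearOrder α] (B : α → α → Prop) : Prop :=
  ∀ i j k, i < j → j < k → SymmArc B i k → SymmArc B i j ∧ SymmArc B j k

variable {B : α → α → Prop} {a b c u v w x y z : α}

theorem StrictArc.asymm (h : StrictArc B a b) : ¬ StrictArc B b a := fun h' => h.2 h'.1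

theorem StrictArc.ne (h : StrictArc B a b) : a ≠ b := by
  rintro rfl
  exact h.2 h.1

theorem StrictArc.ne_of_strictArc (hab : StrictArc B a b) (hbc : StrictArc B b c) : a ≠ c := by
  rintro rfl
  exact hab.asymm hbc

theorem SymmArc.symm (h : SymmArc B a b) : SymmArc B b a := ⟨h.2, h.1⟩

instance : Std.Symm (SymmArc B) := ⟨fun _ _ => SymmArc.symm⟩

theorem SymmArc.symmConnected (h : SymmArc B a b) : SymmConnected B a b :=
  Relation.ReflTransGen.single h

theorem SymmConnected.refl (a : α) : SymmConnected B a a := Relation.ReflTransGen.refl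

theorem SymmConnected.symm (h : SymmConnected B a b) : SymmConnected B b a :=
  Std.Symm.symm (r := Relation.ReflTransGen (SymmArc B)) _ _ h

theorem SymmConnected.trans (h : SymmConnected B a b) (h' : SymmConnected B b c) :
    SymmConnected B a c :=
  Relation.ReflTransGen.trans h h'

theorem symmArc_flip : SymmArc (flip B) = SymmArc B := by
  ext a b
  exact and_comm

theorem symmConnected_flip : SymmConnected (flip B) = SymmConnected B := by
  rw [SymmConnected, symmArc_flip, SymmConnected]

theorem IsSemicomplete.flip (hS : IsSemicomplete B) : IsSemicomplete (flip B) :=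
  fun u v huv => (hS u v huv).symm

theorem IsRFree.flip (hR : IsRFree B) : IsRFree (flip B) :=
  fun a b c hab hbc hac => hR c b a hbc hab hac

theorem IsUmbrella.flip [LinearOrder α] (hU : IsUmbrella B) : IsUmbrella (flip B) := by
  simpa only [IsUmbrella, symmArc_flip] using hU

theorem IsUmbrella.dual [LinearOrder α] (hU : IsUmbrella B) : IsUmbrella (α := αᵒᵈ) B :=
  fun i j k hij hjk hik =>
    let h := hU k j i hjk hij hik.symm
    ⟨h.2.symm, h.1.symm⟩

theorem StrictArc.trans (hS : IsSemicomplete B) (hR : IsRFree B) (hC : IsC3Free B)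
    (hab : StrictArc B a b) (hbc : StrictArc B b c) : StrictArc B a c := by
  have hac : a ≠ c := hab.ne_of_strictArc hbc
  have hBac : B a c := by
    by_contra hn
    exact hC a b c hab hbc ⟨(hS a c hac).resolve_left hn, hn⟩
  exact ⟨hBac, fun hca => hR a b c hab hbc ⟨hBac, hca⟩⟩

theorem arc_of_strictArc_of_symmArc (hS : IsSemicomplete B) (hR : IsRFree B)
    (huv : StrictArc B u v) (hvw : SymmArc B v w) : B u w := by
  by_contra hn
  have huw : u ≠ w := by
    rintro rfl
    exact huv.2 hvw.1
  exact hR w u v ⟨(hS u w huw).resolve_left hn, hn⟩ huv hvw.symm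

theorem StrictArc.of_symmConnected_right (hS : IsSemicomplete B) (hR : IsRFree B)
    (hxy : StrictArc B x y) (hn : ¬ SymmConnected B x y) (hy : SymmConnected B y z) :
    StrictArc B x z := by
  induction hy with
  | refl => exact hxy
  | @tail v w hyv hvw ih =>
    have hxw : B x w := arc_of_strictArc_of_symmArc hS hR ih hvw
    have hyw : SymmConnected B y w := hyv.tail hvw
    exact ⟨hxw, fun hwx => hn ((SymmArc.symmConnected ⟨hxw, hwx⟩).trans hyw.symm)⟩

theorem StrictArc.of_symmConnected (hS : IsSemicomplete B) (hR : IsRFree B)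
    (hxy : StrictArc B x y) (hn : ¬ SymmConnected B x y) (hx : SymmConnected B x u)
    (hy : SymmConnected B y v) : StrictArc B u v := by
  have hxv : StrictArc B x v := hxy.of_symmConnected_right hS hR hn hy
  have hn' : ¬ SymmConnected (flip B) v x := by
    rw [symmConnected_flip]
    exact fun h => hn (h.symm.trans hy.symm)
  rw [← symmConnected_flip] at hx
  exact StrictArc.of_symmConnected_right (B := flip B) hS.flip hR.flip hxv hn' hx

section Ordered

variable [LinearOrder α]

theorem StrictArc.of_symmConnected_of_le (hS : IsSemicomplete B) (hR : IsRFree B)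
    (hU : IsUmbrella B) (huv : StrictArc B u v) (hlt : u < v) (hv : SymmConnected B v w)
    (hle : v ≤ w) : StrictArc B u w := by
  have strict_of_arc : ∀ y, v ≤ y → B u y → StrictArc B u y := by
    intro y hvy huy
    refine ⟨huy, fun hyu => ?_⟩
    rcases hvy.eq_or_lt with rfl | hvy
    · exact huv.2 hyu
    · exact huv.2 (hU u v y hlt hvy ⟨huy, hyu⟩).1.2
  induction hv with
  | refl => exact huv
  | @tail x y _ hxy ih =>
    refine strict_of_arc y hle ?_
    rcases le_or_gt v x with hvx | hxv
    · exact arc_of_strictArc_of_symmArc hS hR (ih hvx) hxy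
    · rcases hle.eq_or_lt with rfl | hvy
      · exact huv.1
      · exact arc_of_strictArc_of_symmArc hS hR huv (hU x v y hxv hvy hxy).2

theorem StrictArc.of_symmConnected_of_ge (hS : IsSemicomplete B) (hR : IsRFree B)
    (hU : IsUmbrella B) (huv : StrictArc B u v) (hlt : u < v) (hu : SymmConnected B u w)
    (hle : w ≤ u) : StrictArc B w v := by
  rw [← symmConnected_flip] at hu
  exact StrictArc.of_symmConnected_of_le (α := αᵒᵈ) (B := flip B) hS.flip hR.flip hU.flip.dual
    huv hlt hu hle

theorem StrictArc.of_symmConnected_of_le_of_le (hS : IsSemicomplete B) (hR : IsRFree B)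
    (hU : IsUmbrella B) (huv : StrictArc B u v) (hlt : u < v) (hx : SymmConnected B x u)
    (hxu : x ≤ u) (hy : SymmConnected B v y) (hvy : v ≤ y) : StrictArc B x y :=
  (huv.of_symmConnected_of_le hS hR hU hlt hy hvy).of_symmConnected_of_ge hS hR hU
    (hlt.trans_le hvy) hx.symm hxu

def HasBackwardArc (B : α → α → Prop) (x : α) : Prop :=
  ∃ p q, SymmConnected B x p ∧ SymmConnected B x q ∧ p < q ∧ StrictArc B q p

theorem hasBackwardArc_congr (h : SymmConnected B x y) :
    HasBackwardArc B x ↔ HasBackwardArc B y := by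
  constructor
  · rintro ⟨p, q, hp, hq, hpq, hqp⟩
    exact ⟨p, q, h.symm.trans hp, h.symm.trans hq, hpq, hqp⟩
  · rintro ⟨p, q, hp, hq, hpq, hqp⟩
    exact ⟨p, q, h.trans hp, h.trans hq, hpq, hqp⟩

/-- Both arcs would extend to strict arcs in opposite directions between the leftmost and the
rightmost of the four endpoints. -/
theorem not_hasBackwardArc_of_strictArc (hS : IsSemicomplete B) (hR : IsRFree B)
    (hU : IsUmbrella B) (hu : SymmConnected B x u) (hv : SymmConnected B x v) (hlt : u < v)
    (huv : StrictArc B u v) : ¬ HasBackwardArc B x := by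
  rintro ⟨p, q, hp, hq, hpq, hqp⟩
  have hmin : SymmConnected B x (min u p) := by
    rcases min_choice u p with h | h <;> rw [h] <;> assumption
  have hmax : SymmConnected B x (max v q) := by
    rcases max_choice v q with h | h <;> rw [h] <;> assumption
  have hfwd : StrictArc B (min u p) (max v q) :=
    huv.of_symmConnected_of_le_of_le hS hR hU hlt (hmin.symm.trans hu) (min_le_left u p)
      (hv.symm.trans hmax) (le_max_left v q)
  rw [← symmConnected_flip] at hp hq hmin hmax
  have hbwd : StrictArc (flip B) (min u p) (max v q) :=
    StrictArc.of_symmConnected_of_le_of_le (B := flip B) hS.flip hR.flip hU.flip hqp hpq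
      (hmin.symm.trans hp) (min_le_right u p) (hq.symm.trans hmax) (le_max_right v q)
  exact hfwd.asymm hbwd

open Classical in
/-- Components of the symmetric part are ordered by their strict arcs; inside a component the
position order is kept, or reversed if the component carries a strict arc against it. -/
noncomputable def Precedes (B : α → α → Prop) (x y : α) : Prop :=
  if SymmConnected B x y then (if HasBackwardArc B x then y < x else x < y) else StrictArc B x y

theorem precedes_iff_of_hasBackwardArc (h : SymmConnected B x y) (hb : HasBackwardArc B x) :
    Precedes B x y ↔ y < x := by
  rw [Precedes, if_pos h, if_pos hb]

theorem precedes_iff_of_not_hasBackwardArc (h : SymmConnected B x y)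
    (hb : ¬ HasBackwardArc B x) : Precedes B x y ↔ x < y := by
  rw [Precedes, if_pos h, if_neg hb]

theorem precedes_iff_of_not_symmConnected (h : ¬ SymmConnected B x y) :
    Precedes B x y ↔ StrictArc B x y := by
  rw [Precedes, if_neg h]

theorem precedes_irrefl (x : α) : ¬ Precedes B x x := by
  by_cases hb : HasBackwardArc B x
  · rw [precedes_iff_of_hasBackwardArc (.refl x) hb]
    exact lt_irrefl x
  · rw [precedes_iff_of_not_hasBackwardArc (.refl x) hb]
    exact lt_irrefl x

theorem precedes_or_precedes (hS : IsSemicomplete B) (hne : x ≠ y) :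
    Precedes B x y ∨ Precedes B y x := by
  by_cases hxy : SymmConnected B x y
  · by_cases hb : HasBackwardArc B x
    · rw [precedes_iff_of_hasBackwardArc hxy hb,
        precedes_iff_of_hasBackwardArc hxy.symm ((hasBackwardArc_congr hxy).1 hb)]
      exact hne.lt_or_gt.symm
    · rw [precedes_iff_of_not_hasBackwardArc hxy hb,
        precedes_iff_of_not_hasBackwardArc hxy.symm (mt (hasBackwardArc_congr hxy).2 hb)]
      exact hne.lt_or_gt
  · have hyx : ¬ SymmConnected B y x := fun h => hxy h.symm
    rw [precedes_iff_of_not_symmConnected hxy, precedes_iff_of_not_symmConnected hyx]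
    rcases hS x y hne with h | h
    · exact Or.inl ⟨h, fun h' => hxy (SymmArc.symmConnected ⟨h, h'⟩)⟩
    · exact Or.inr ⟨h, fun h' => hxy (SymmArc.symmConnected ⟨h', h⟩)⟩

theorem precedes_trans (hS : IsSemicomplete B) (hR : IsRFree B) (hC : IsC3Free B)
    (hxy : Precedes B x y) (hyz : Precedes B y z) : Precedes B x z := by
  by_cases cxy : SymmConnected B x y <;> by_cases cyz : SymmConnected B y z
  · have cxz := cxy.trans cyz
    by_cases hb : HasBackwardArc B x
    · have hb' := (hasBackwardArc_congr cxy).1 hb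
      rw [precedes_iff_of_hasBackwardArc cxy hb] at hxy
      rw [precedes_iff_of_hasBackwardArc cyz hb'] at hyz
      rw [precedes_iff_of_hasBackwardArc cxz hb]
      exact hyz.trans hxy
    · have hb' := mt (hasBackwardArc_congr cxy).2 hb
      rw [precedes_iff_of_not_hasBackwardArc cxy hb] at hxy
      rw [precedes_iff_of_not_hasBackwardArc cyz hb'] at hyz
      rw [precedes_iff_of_not_hasBackwardArc cxz hb]
      exact hxy.trans hyz
  · have cxz : ¬ SymmConnected B x z := fun h => cyz (cxy.symm.trans h)
    rw [precedes_iff_of_not_symmConnected cyz] at hyz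
    rw [precedes_iff_of_not_symmConnected cxz]
    exact hyz.of_symmConnected hS hR cyz cxy.symm (.refl z)
  · have cxz : ¬ SymmConnected B x z := fun h => cxy (h.trans cyz.symm)
    rw [precedes_iff_of_not_symmConnected cxy] at hxy
    rw [precedes_iff_of_not_symmConnected cxz]
    exact hxy.of_symmConnected hS hR cxy (.refl x) cyz
  · rw [precedes_iff_of_not_symmConnected cxy] at hxy
    rw [precedes_iff_of_not_symmConnected cyz] at hyz
    by_cases cxz : SymmConnected B x z
    · exact absurd (hxy.of_symmConnected hS hR cxy cxz (.refl y)) hyz.asymm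
    · rw [precedes_iff_of_not_symmConnected cxz]
      exact hxy.trans hS hR hC hyz

theorem isStrictTotalOrder_precedes (hS : IsSemicomplete B) (hR : IsRFree B)
    (hC : IsC3Free B) : IsStrictTotalOrder α (Precedes B) where
  trichotomous _ _ hxy hyx := by_contra fun hne => (precedes_or_precedes hS hne).elim hxy hyx
  irrefl := precedes_irrefl
  trans _ _ _ := precedes_trans hS hR hC

theorem Precedes.arc (hS : IsSemicomplete B) (hR : IsRFree B) (hU : IsUmbrella B)
    (h : Precedes B x y) : B x y := by
  by_contra hn
  have hne : x ≠ y := by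
    rintro rfl
    exact precedes_irrefl x h
  have hyx : StrictArc B y x := ⟨(hS x y hne).resolve_left hn, hn⟩
  by_cases cxy : SymmConnected B x y
  · by_cases hb : HasBackwardArc B x
    · rw [precedes_iff_of_hasBackwardArc cxy hb] at h
      exact not_hasBackwardArc_of_strictArc hS hR hU cxy (.refl x) h hyx hb
    · rw [precedes_iff_of_not_hasBackwardArc cxy hb] at h
      exact hb ⟨x, y, .refl x, cxy, h, hyx⟩
  · rw [precedes_iff_of_not_symmConnected cxy] at h
    exact hn h.1

theorem precedes_umbrella (hS : IsSemicomplete B) (hR : IsRFree B) (hU : IsUmbrella B)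
    (hxy : Precedes B x y) (hyz : Precedes B y z) (hxz : SymmArc B x z) :
    SymmArc B x y ∧ SymmArc B y z := by
  have cxz : SymmConnected B x z := hxz.symmConnected
  have cxy : SymmConnected B x y := by
    by_contra cxy
    have cyz : ¬ SymmConnected B y z := fun h => cxy (cxz.trans h.symm)
    rw [precedes_iff_of_not_symmConnected cxy] at hxy
    rw [precedes_iff_of_not_symmConnected cyz] at hyz
    exact hyz.asymm (hxy.of_symmConnected hS hR cxy cxz (.refl y))
  have cyz : SymmConnected B y z := cxy.symm.trans cxz
  by_cases hb : HasBackwardArc B x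
  · have hb' := (hasBackwardArc_congr cxy).1 hb
    rw [precedes_iff_of_hasBackwardArc cxy hb] at hxy
    rw [precedes_iff_of_hasBackwardArc cyz hb'] at hyz
    have h := hU z y x hyz hxy hxz.symm
    exact ⟨h.2.symm, h.1.symm⟩
  · have hb' := mt (hasBackwardArc_congr cxy).2 hb
    rw [precedes_iff_of_not_hasBackwardArc cxy hb] at hxy
    rw [precedes_iff_of_not_hasBackwardArc cyz hb'] at hyz
    exact hU x y z hxy hyz hxz

end Ordered

end Semicomplete

open Semicomplete in
theorem stmt4_general {n : ℕ} (A : Fin n → Fin n → Prop)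
    (hsemi : ∀ u v : Fin n, u ≠ v → A u v ∨ A v u)
    (hnoR : ¬ ∃ a b c : Fin n, a ≠ b ∧ a ≠ c ∧ b ≠ c ∧
      A a b ∧ A b c ∧ A c a ∧ A a c ∧ ¬ A b a ∧ ¬ A c b)
    (hnoC3 : ¬ ∃ a b c : Fin n, a ≠ b ∧ a ≠ c ∧ b ≠ c ∧
      A a b ∧ A b c ∧ A c a ∧ ¬ A b a ∧ ¬ A c b ∧ ¬ A a c)
    (hpin : ∃ σ : Equiv.Perm (Fin n), ∀ i j k : Fin n, i < j → j < k →
      (A (σ i) (σ k) ∧ A (σ k) (σ i)) →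
      (A (σ i) (σ j) ∧ A (σ j) (σ i)) ∧ (A (σ j) (σ k) ∧ A (σ k) (σ j))) :
    ∃ σ : Equiv.Perm (Fin n),
      (∀ i j k : Fin n, i < j → j < k → (A (σ i) (σ k) ∧ A (σ k) (σ i)) →
        (A (σ i) (σ j) ∧ A (σ j) (σ i)) ∧ (A (σ j) (σ k) ∧ A (σ k) (σ j))) ∧
      (∀ i j : Fin n, i < j → A (σ i) (σ j)) := by
  obtain ⟨σ₀, hσ₀⟩ := hpin
  set B : Fin n → Fin n → Prop := fun i j => A (σ₀ i) (σ₀ j)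
  have hS : IsSemicomplete B := fun u v huv => hsemi _ _ (σ₀.injective.ne huv)
  have hR : IsRFree B := fun a b c hab hbc hac =>
    hnoR ⟨σ₀ a, σ₀ b, σ₀ c, σ₀.injective.ne hab.ne, σ₀.injective.ne (hab.ne_of_strictArc hbc),
      σ₀.injective.ne hbc.ne, hab.1, hbc.1, hac.2, hac.1, hab.2, hbc.2⟩
  have hC : IsC3Free B := fun a b c hab hbc hca =>
    hnoC3 ⟨σ₀ a, σ₀ b, σ₀ c, σ₀.injective.ne hab.ne, σ₀.injective.ne hca.ne.symm,
      σ₀.injective.ne hbc.ne, hab.1, hbc.1, hca.1, hab.2, hbc.2, hca.2⟩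
  have hU : IsUmbrella B := hσ₀
  have := isStrictTotalOrder_precedes hS hR hC
  obtain ⟨π, hπ⟩ := exists_equiv_fin_of_isStrictTotalOrder (Fintype.card_fin n) (Precedes B)
  exact ⟨π.trans σ₀,
    fun i j k hij hjk hik => precedes_umbrella (B := B) hS hR hU (hπ i j hij) (hπ j k hjk) hik,
    fun i j hij => Precedes.arc (B := B) hS hR hU (hπ i j hij)⟩

/-- A reflexive semicomplete digraph with no induced `R`, no induced
reflexive 3-cycle, and proper interval underlying graph of its symmetric subdigraph,
admits an ordering in which symmetric arcs satisfy the umbrella condition and every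
earlier vertex dominates every later vertex. -/
theorem stmt4 {n : ℕ} (A : Fin n → Fin n → Prop)
    (hrefl : ∀ v, A v v)
    (hsemi : ∀ u v : Fin n, u ≠ v → A u v ∨ A v u)
    (hnoR : ¬ ∃ a b c : Fin n, a ≠ b ∧ a ≠ c ∧ b ≠ c ∧
      A a b ∧ A b c ∧ A c a ∧ A a c ∧ ¬ A b a ∧ ¬ A c b)
    (hnoC3 : ¬ ∃ a b c : Fin n, a ≠ b ∧ a ≠ c ∧ b ≠ c ∧
      A a b ∧ A b c ∧ A c a ∧ ¬ A b a ∧ ¬ A c b ∧ ¬ A a c)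
    (hpin : ∃ σ : Equiv.Perm (Fin n), ∀ i j k : Fin n, i < j → j < k →
      (A (σ i) (σ k) ∧ A (σ k) (σ i)) →
      (A (σ i) (σ j) ∧ A (σ j) (σ i)) ∧ (A (σ j) (σ k) ∧ A (σ k) (σ j))) :
    ∃ σ : Equiv.Perm (Fin n),
      (∀ i j k : Fin n, i < j → j < k → (A (σ i) (σ k) ∧ A (σ k) (σ i)) →
        (A (σ i) (σ j) ∧ A (σ j) (σ i)) ∧ (A (σ j) (σ k) ∧ A (σ k) (σ j))) ∧
      (∀ i j : Fin n, i < j → A (σ i) (σ j)) :=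
  stmt4_general A hsemi hnoR hnoC3 hpin
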